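/- arXiv:2603.14955 — 2 statements merged into one kernel-verified Lean document; each statement's English description precedes it below -/
import Mathlib

section
/- Let E be a closed subset of [0,1] with 0 ∈ E, set Δ := { (a,b) ∈ [0,1]² : a, b ∈ E, a < b, (a,b) ∩ E = ∅ }, and let (σ_{a,b})_{(a,b)∈Δ} be any family of elements of {1, ∞}. Then there exists a convex algebra ⟨[0,1], ⊕_p⟩ satisfying (MO), (UC) and (LC) such that E^⊕ = E (and hence Δ^⊕ = Δ) and τ^⊕_{a,b} = σ_{a,b} for all (a,b) ∈ Δ. -/
open Set Filter Topology

/-- A convex algebra on the interval `[0,1] ⊆ ℝ`: `op p x y` denotes `x ⊕_p y`,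
for `p ∈ (0,1)`, extended to `p ∈ [0,1]` by the projection axioms
`x ⊕_1 y = x` and `x ⊕_0 y = y`.  All axioms are required only on `[0,1]`;
values of `op` outside `[0,1]` are irrelevant. -/
structure UCA where
  op : ℝ → ℝ → ℝ → ℝ
  mem : ∀ p ∈ Set.Icc (0:ℝ) 1, ∀ x ∈ Set.Icc (0:ℝ) 1, ∀ y ∈ Set.Icc (0:ℝ) 1,
      op p x y ∈ Set.Icc (0:ℝ) 1
  idem : ∀ p ∈ Set.Ioo (0:ℝ) 1, ∀ x ∈ Set.Icc (0:ℝ) 1, op p x x = x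
  comm : ∀ p ∈ Set.Ioo (0:ℝ) 1, ∀ x ∈ Set.Icc (0:ℝ) 1, ∀ y ∈ Set.Icc (0:ℝ) 1,
      op p x y = op (1 - p) y x
  assoc : ∀ p ∈ Set.Ioo (0:ℝ) 1, ∀ q ∈ Set.Ioo (0:ℝ) 1,
      ∀ x ∈ Set.Icc (0:ℝ) 1, ∀ y ∈ Set.Icc (0:ℝ) 1, ∀ z ∈ Set.Icc (0:ℝ) 1,
      op q (op p x y) z = op (p * q) x (op ((1 - p) * q / (1 - p * q)) y z)
  proj1 : ∀ x ∈ Set.Icc (0:ℝ) 1, ∀ y ∈ Set.Icc (0:ℝ) 1, op 1 x y = x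
  proj0 : ∀ x ∈ Set.Icc (0:ℝ) 1, ∀ y ∈ Set.Icc (0:ℝ) 1, op 0 x y = y

/-- Monotonicity (MO): `x ≤ x'` implies `x ⊕_p y ≤ x' ⊕_p y`. -/
def UCA.MO (A : UCA) : Prop :=
  ∀ x ∈ Set.Icc (0:ℝ) 1, ∀ x' ∈ Set.Icc (0:ℝ) 1, ∀ y ∈ Set.Icc (0:ℝ) 1,
    ∀ p ∈ Set.Ioo (0:ℝ) 1, x ≤ x' → A.op p x y ≤ A.op p x' y

/-- (UC): for `x, y ∈ [0,1)` and `p ∈ (0,1)`,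
`limsup_{ε→0⁺} ((x+ε) ⊕_p (y+ε)) ≤ x ⊕_p y`. -/
def UCA.UC (A : UCA) : Prop :=
  ∀ x ∈ Set.Ico (0:ℝ) 1, ∀ y ∈ Set.Ico (0:ℝ) 1, ∀ p ∈ Set.Ioo (0:ℝ) 1,
    Filter.limsup (fun ε => A.op p (x + ε) (y + ε)) (𝓝[>] (0:ℝ)) ≤ A.op p x y

/-- (LC): for `x ≤ y` in `[0,1]`, `liminf_{p→1⁻} (y ⊕_p x) ≥ y`. -/
def UCA.LC (A : UCA) : Prop :=
  ∀ x ∈ Set.Icc (0:ℝ) 1, ∀ y ∈ Set.Icc (0:ℝ) 1, x ≤ y →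
    y ≤ Filter.liminf (fun p => A.op p y x) (𝓝[<] (1:ℝ))

/-- `y ⊳ x` : `y` eats `x`, i.e. `y ⊕_t x = y` for all `t ∈ (0,1]`. -/
def UCA.Eats (A : UCA) (y x : ℝ) : Prop :=
  ∀ t ∈ Set.Ioc (0:ℝ) 1, A.op t y x = y

/-- `E^⊕ = { y ∈ [0,1] : y ⊳ 0 }`. -/
def UCA.E (A : UCA) : Set ℝ := {y ∈ Set.Icc (0:ℝ) 1 | A.Eats y 0}

/-- `V_{x,y} = inf { y ⊕_p x : p ∈ (0,1] }`. -/
noncomputable def UCA.V (A : UCA) (x y : ℝ) : ℝ :=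
  sInf ((fun p => A.op p y x) '' Set.Ioc (0:ℝ) 1)

/-- The interval `[0, τ)` for `τ ∈ {1, ∞}` (encoded in `ℝ≥0∞`):
`{t : ℝ | 0 ≤ t, t < τ}`. -/
def tauSet (τ : ENNReal) : Set ℝ := {t : ℝ | 0 ≤ t ∧ ENNReal.ofReal t < τ}

/-- `Φ` is an isomorphism of `⟨[0,τ), +_p⟩` (operations induced by linear combinations)
onto `⟨[a,b), ⊕_p⟩`: a bijection of `[0,τ)` onto `[a,b)` with
`Φ(s +_p t) = Φ(s) ⊕_p Φ(t)`. -/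
def UCA.IsTauIso (A : UCA) (a b : ℝ) (τ : ENNReal) (Φ : ℝ → ℝ) : Prop :=
  Set.BijOn Φ (tauSet τ) (Set.Ico a b) ∧
  ∀ p ∈ Set.Ioo (0:ℝ) 1, ∀ s ∈ tauSet τ, ∀ t ∈ tauSet τ,
    Φ (p * s + (1 - p) * t) = A.op p (Φ s) (Φ t)

/-- `(a,b) ∈ Δ^⊕`: `a, b ∈ E^⊕`, `a < b`, and `(a,b) ∩ E^⊕ = ∅`. -/
def UCA.Delta (A : UCA) (a b : ℝ) : Prop :=
  a ∈ A.E ∧ b ∈ A.E ∧ a < b ∧ Set.Ioo a b ∩ A.E = ∅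

/-!
Every `x ∈ [0,1]` has a level `max (E ∩ [0,x])`, and the points of level `m ∈ E` form the gap
`[m, b)` up to the next point `b` of `E` (just `{m}` when `m` is a limit of `E` from the right).
A chart `[0, σ_{m,b}) → [m, b)`, affine for `σ = 1` and through `t ↦ t / (1 + t)` for
`σ = ∞`, gives each gap the operations `+_p`. To form `x ⊕_p y`, take the larger level `M` of
`x` and `y`, replace an argument of lower level by `M`, and combine the two chart coordinates
at level `M`. Levels combine by `max` and the level-`M` coordinate is affine for `⊕_p`, which
yields the convex algebra axioms; points of `E` absorb everything below them, and the gap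
`[a, b)` is isomorphic to `[0, σ_{a,b})` through its chart. Monotonicity and continuity of the
charts give (MO), (LC) and (UC); a coordinate jumps to the right only at a level `M` that is a
limit of `E` from the right, and there `x ⊕_p y = max x y`.
-/

namespace GapSum

variable (E : Set ℝ) (σ : ℝ → ℝ → ENNReal)

noncomputable def level (x : ℝ) : ℝ := sSup (E ∩ Iic x)

/-- The point `2` closes off the gap above `max E`; any point beyond `1` would do. -/
noncomputable def next (m : ℝ) : ℝ := sInf (insert 2 E ∩ Ioi m)

/-- For `τ ∈ {1, ∞}`, `profile τ` maps `[0, τ)` onto `[0, 1)`; other values of `τ` behave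
like `1`. -/
noncomputable def profile (τ : ENNReal) (t : ℝ) : ℝ := if τ = ⊤ then t / (1 + t) else t

noncomputable def profileInv (τ : ENNReal) (s : ℝ) : ℝ := if τ = ⊤ then s / (1 - s) else s

noncomputable def chart (m t : ℝ) : ℝ := m + (next E m - m) * profile (σ m (next E m)) t

noncomputable def coord (m z : ℝ) : ℝ := profileInv (σ m (next E m)) ((z - m) / (next E m - m))

/-- A point of lower level than `M` counts as `M` itself, whose coordinate is `0`. -/
noncomputable def levelCoord (M x : ℝ) : ℝ := if M ≤ x then coord E σ M x else 0

noncomputable def op (p x y : ℝ) : ℝ :=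
  if p ≤ 0 then y else if 1 ≤ p then x else
    chart E σ (max (level E x) (level E y))
      (p * levelCoord E σ (max (level E x) (level E y)) x
        + (1 - p) * levelCoord E σ (max (level E x) (level E y)) y)

variable {E σ}

section Profile

variable {τ : ENNReal} {s t : ℝ}

lemma profile_zero : profile τ 0 = 0 := by simp [profile]

lemma profileInv_zero : profileInv τ 0 = 0 := by simp [profileInv]

lemma strictMonoOn_profile : StrictMonoOn (profile τ) (Ici 0) := by
  intro s (hs : 0 ≤ s) t (ht : 0 ≤ t) hst
  simp only [profile]
  split_ifs
  · rw [div_lt_div_iff₀ (by linarith) (by linarith)]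
    linarith
  · exact hst

lemma profile_nonneg (ht : 0 ≤ t) : 0 ≤ profile τ t :=
  profile_zero (τ := τ) ▸ strictMonoOn_profile.monotoneOn (mem_Ici.2 le_rfl) ht ht

lemma profileInv_nonneg (hs : s ∈ Ico 0 1) : 0 ≤ profileInv τ s := by
  unfold profileInv
  split_ifs
  · exact div_nonneg hs.1 (by linarith [hs.2])
  · exact hs.1

lemma profileInv_profile (ht : 0 ≤ t) : profileInv τ (profile τ t) = t := by
  unfold profileInv profile
  split_ifs
  · have : 1 + t ≠ 0 := by linarith
    field_simp
    ring
  · rfl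

lemma profile_profileInv (hs : s < 1) : profile τ (profileInv τ s) = s := by
  unfold profileInv profile
  split_ifs
  · have : 1 - s ≠ 0 := by linarith
    field_simp
    ring
  · rfl

lemma continuousAt_profile (ht : 0 ≤ t) : ContinuousAt (profile τ) t := by
  unfold profile
  split_ifs
  · have : 1 + t ≠ 0 := by linarith
    fun_prop (disch := assumption)
  · exact continuousAt_id

lemma continuousAt_profileInv (hs : s < 1) : ContinuousAt (profileInv τ) s := by
  unfold profileInv
  split_ifs
  · have : 1 - s ≠ 0 := by linarith
    fun_prop (disch := assumption)
  · exact continuousAt_id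

lemma profile_mem_Ico (hτ : τ ∈ ({1, ⊤} : Set ENNReal)) (ht : t ∈ tauSet τ) :
    profile τ t ∈ Ico 0 1 := by
  obtain ⟨ht0, htτ⟩ := ht
  refine ⟨profile_nonneg ht0, ?_⟩
  rcases hτ with rfl | rfl
  · simpa [profile] using htτ
  · simp only [profile, if_true]
    rw [div_lt_one (by linarith)]
    linarith

lemma profileInv_mem_tauSet (hτ : τ ∈ ({1, ⊤} : Set ENNReal)) (hs : s ∈ Ico 0 1) :
    profileInv τ s ∈ tauSet τ := by
  refine ⟨profileInv_nonneg hs, ?_⟩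
  rcases hτ with rfl | rfl
  · simpa [profileInv] using hs.2
  · exact ENNReal.ofReal_lt_top

end Profile

section Level

variable {m x y z e : ℝ}

lemma bddAbove_inter_Iic : BddAbove (E ∩ Iic x) := ⟨x, fun _ he => he.2⟩

lemma le_level (he : e ∈ E) (hex : e ≤ x) : e ≤ level E x :=
  le_csSup bddAbove_inter_Iic ⟨he, hex⟩

lemma level_le (h0 : (0:ℝ) ∈ E) (hx : 0 ≤ x) : level E x ≤ x :=
  csSup_le ⟨0, h0, hx⟩ fun _ he => he.2

lemma level_mem (hE : IsClosed E) (h0 : (0:ℝ) ∈ E) (hx : 0 ≤ x) : level E x ∈ E :=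
  ((hE.inter isClosed_Iic).csSup_mem ⟨0, h0, hx⟩ bddAbove_inter_Iic).1

lemma level_nonneg (h0 : (0:ℝ) ∈ E) (hx : 0 ≤ x) : 0 ≤ level E x := le_level h0 hx

lemma level_of_mem (hx : x ∈ E) : level E x = x :=
  le_antisymm (csSup_le ⟨x, hx, mem_Iic.2 le_rfl⟩ fun _ he => he.2) (le_level hx le_rfl)

lemma level_mono (h0 : (0:ℝ) ∈ E) (hx : 0 ≤ x) (hxy : x ≤ y) : level E x ≤ level E y :=
  csSup_le_csSup bddAbove_inter_Iic ⟨0, h0, hx⟩ fun _ he => ⟨he.1, he.2.trans hxy⟩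

lemma level_max (h0 : (0:ℝ) ∈ E) (hx : 0 ≤ x) (hy : 0 ≤ y) :
    level E (max x y) = max (level E x) (level E y) := by
  rcases le_total x y with h | h
  · rw [max_eq_right h, max_eq_right (level_mono h0 hx h)]
  · rw [max_eq_left h, max_eq_left (level_mono h0 hy h)]

lemma max_level_mem (hE : IsClosed E) (h0 : (0:ℝ) ∈ E) (hx : 0 ≤ x) (hy : 0 ≤ y) :
    max (level E x) (level E y) ∈ E :=
  max_rec' (· ∈ E) (level_mem hE h0 hx) (level_mem hE h0 hy)

lemma level_eq_of_le (hm : m ∈ E) (hxm : level E x ≤ m) (hmx : m ≤ x) : level E x = m :=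
  le_antisymm hxm (le_level hm hmx)

lemma lt_of_level_lt (hm : m ∈ E) (h : level E x < m) : x < m :=
  not_le.1 fun hmx => (le_level hm hmx).not_gt h

lemma bddBelow_inter_Ioi : BddBelow (insert 2 E ∩ Ioi m) := ⟨m, fun _ he => he.2.le⟩

lemma le_next (hm : m < 2) : m ≤ next E m :=
  le_csInf ⟨2, mem_insert _ _, hm⟩ fun _ he => he.2.le

lemma next_le (he : e ∈ E) (hme : m < e) : next E m ≤ e :=
  csInf_le bddBelow_inter_Ioi ⟨mem_insert_of_mem _ he, hme⟩

lemma next_mem (hE : IsClosed E) (hm : m < 2) : next E m ∈ insert 2 E := by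
  have hcl : IsClosed (insert (2:ℝ) E) := by
    rw [insert_eq]
    exact isClosed_singleton.union hE
  exact hcl.closure_subset <| closure_mono inter_subset_left <|
    csInf_mem_closure ⟨2, mem_insert _ _, hm⟩ bddBelow_inter_Ioi

lemma level_eq_of_lt_next (hm : m ∈ E) (hmz : m ≤ z) (hz : z < next E m) : level E z = m := by
  refine le_antisymm (csSup_le ⟨m, hm, hmz⟩ fun e ⟨he, hez⟩ => ?_) (le_level hm hmz)
  by_contra! hme
  exact ((next_le he hme).trans hez).not_gt hz

lemma lt_next_of_level_eq (hE : IsClosed E) (hz1 : z ≤ 1) (hmz : m < z)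
    (h : level E z = m) : z < next E m := by
  have hlow : ∀ e ∈ insert 2 E ∩ Ioi m, z < e := by
    rintro e ⟨rfl | he, hme⟩
    · linarith
    · by_contra! hez
      exact (h ▸ le_level he hez).not_gt hme
  have hle : z ≤ next E m :=
    le_csInf ⟨2, mem_insert _ _, mem_Ioi.2 (by linarith)⟩ fun e he => (hlow e he).le
  refine hle.lt_of_ne fun heq => ?_
  rcases next_mem hE (show m < 2 by linarith) with h2 | hE'
  · linarith
  · rw [← heq] at hE'
    exact hmz.ne' (h ▸ (level_of_mem hE').symm)

end Level

section Chart

variable {m s t z : ℝ}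

lemma chart_zero : chart E σ m 0 = m := by simp [chart, profile_zero]

lemma coord_self : coord E σ m m = 0 := by simp [coord, profileInv_zero]

lemma monotoneOn_chart (hm : m ≤ 1) : MonotoneOn (chart E σ m) (Ici 0) := by
  intro s hs t ht hst
  have hw : 0 ≤ next E m - m := sub_nonneg.2 (le_next (by linarith))
  have := mul_le_mul_of_nonneg_left
    ((strictMonoOn_profile (τ := σ m (next E m))).monotoneOn hs ht hst) hw
  unfold chart
  linarith

lemma strictMonoOn_chart (hm : m < next E m) : StrictMonoOn (chart E σ m) (Ici 0) := by
  intro s hs t ht hst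
  have := mul_lt_mul_of_pos_left (strictMonoOn_profile (τ := σ m (next E m)) hs ht hst)
    (sub_pos.2 hm)
  unfold chart
  linarith

lemma continuousAt_chart (ht : 0 ≤ t) : ContinuousAt (chart E σ m) t :=
  continuousAt_const.add (continuousAt_const.mul (continuousAt_profile ht))

lemma coord_chart (hm : m < next E m) (ht : 0 ≤ t) : coord E σ m (chart E σ m t) = t := by
  have hw : next E m - m ≠ 0 := (sub_pos.2 hm).ne'
  simp only [coord, chart, add_sub_cancel_left, mul_div_cancel_left₀ _ hw, profileInv_profile ht]

lemma div_sub_mem_Ico (hmz : m ≤ z) (hz : z < next E m) :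
    (z - m) / (next E m - m) ∈ Ico 0 1 :=
  ⟨div_nonneg (sub_nonneg.2 hmz) (by linarith), (div_lt_one (by linarith)).2 (by linarith)⟩

lemma coord_nonneg (hmz : m ≤ z) (hz : z < next E m) : 0 ≤ coord E σ m z :=
  profileInv_nonneg (div_sub_mem_Ico hmz hz)

lemma continuousAt_coord (hmz : m ≤ z) (hz : z < next E m) : ContinuousAt (coord E σ m) z :=
  (continuousAt_profileInv (div_sub_mem_Ico hmz hz).2).comp
    (f := fun z => (z - m) / (next E m - m)) (by fun_prop)

lemma chart_coord (hE : IsClosed E) (hz1 : z ≤ 1) (hmz : m ≤ z) (h : level E z = m) :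
    chart E σ m (coord E σ m z) = z := by
  rcases hmz.eq_or_lt with rfl | hlt
  · rw [coord_self, chart_zero]
  · have hz := lt_next_of_level_eq hE hz1 hlt h
    have hw : next E m - m ≠ 0 := by linarith
    simp only [chart, coord, profile_profileInv (div_sub_mem_Ico hlt.le hz).2,
      mul_div_cancel₀ _ hw, add_sub_cancel]

end Chart

section LevelCoord

variable {M x x' : ℝ}

lemma levelCoord_of_lt (h : x < M) : levelCoord E σ M x = 0 := if_neg h.not_ge

lemma levelCoord_of_le (h : M ≤ x) : levelCoord E σ M x = coord E σ M x := if_pos h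

lemma le_of_level_le_of_next_eq (hE : IsClosed E) (hM : M ∈ E) (hdeg : next E M = M)
    (hx1 : x ≤ 1) (hxM : level E x ≤ M) : x ≤ M := by
  by_contra! hlt
  exact (lt_next_of_level_eq hE hx1 hlt (level_eq_of_le hM hxM hlt.le)).not_ge
    (hdeg.le.trans hlt.le)

lemma levelCoord_nonneg (hE : IsClosed E) (hM : M ∈ E) (hx1 : x ≤ 1) (hxM : level E x ≤ M) :
    0 ≤ levelCoord E σ M x := by
  by_cases h : M ≤ x
  · rw [levelCoord_of_le h]
    rcases h.eq_or_lt with rfl | hlt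
    · rw [coord_self]
    · exact coord_nonneg h (lt_next_of_level_eq hE hx1 hlt (level_eq_of_le hM hxM h))
  · rw [levelCoord_of_lt (not_le.1 h)]

lemma chart_levelCoord (hE : IsClosed E) (hM : M ∈ E) (hx1 : x ≤ 1) (hxM : level E x ≤ M) :
    chart E σ M (levelCoord E σ M x) = max x M := by
  by_cases h : M ≤ x
  · rw [levelCoord_of_le h, chart_coord hE hx1 h (level_eq_of_le hM hxM h), max_eq_left h]
  · rw [levelCoord_of_lt (not_le.1 h), chart_zero, max_eq_right (not_le.1 h).le]

lemma levelCoord_of_next_eq (hE : IsClosed E) (hM : M ∈ E) (hdeg : next E M = M) (hx1 : x ≤ 1)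
    (hxM : level E x ≤ M) : levelCoord E σ M x = 0 := by
  rcases (le_of_level_le_of_next_eq hE hM hdeg hx1 hxM).lt_or_eq with hlt | rfl
  · exact levelCoord_of_lt hlt
  · rw [levelCoord_of_le le_rfl, coord_self]

lemma levelCoord_mono (hE : IsClosed E) (hM : M ∈ E) (hM1 : M ≤ 1) (hx'1 : x' ≤ 1)
    (hxx' : x ≤ x') (hxM : level E x ≤ M) (hx'M : level E x' ≤ M) :
    levelCoord E σ M x ≤ levelCoord E σ M x' := by
  have hx1 : x ≤ 1 := hxx'.trans hx'1
  by_cases hdeg : next E M = M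
  · rw [levelCoord_of_next_eq hE hM hdeg hx1 hxM, levelCoord_of_next_eq hE hM hdeg hx'1 hx'M]
  have hMn : M < next E M := (le_next (by linarith)).lt_of_ne (Ne.symm hdeg)
  rw [← (strictMonoOn_chart hMn).le_iff_le (levelCoord_nonneg hE hM hx1 hxM)
    (levelCoord_nonneg hE hM hx'1 hx'M), chart_levelCoord hE hM hx1 hxM,
    chart_levelCoord hE hM hx'1 hx'M]
  exact max_le_max hxx' le_rfl

end LevelCoord

section Op

variable {p x y : ℝ}

lemma op_of_mem_Ioo (hp : p ∈ Ioo 0 1) (x y : ℝ) :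
    op E σ p x y = chart E σ (max (level E x) (level E y))
      (p * levelCoord E σ (max (level E x) (level E y)) x
        + (1 - p) * levelCoord E σ (max (level E x) (level E y)) y) := by
  simp only [op, if_neg hp.1.not_ge, if_neg hp.2.not_ge]

lemma max_level_le_max (h0 : (0:ℝ) ∈ E) (hx : x ∈ Icc 0 1) (hy : y ∈ Icc 0 1) :
    max (level E x) (level E y) ≤ max x y :=
  max_le_max (level_le h0 hx.1) (level_le h0 hy.1)

/-- The chart is monotone and sends the two level coordinates back to `max x M` and
`max y M`. -/
lemma op_mem_Icc (hE : IsClosed E) (h0 : (0:ℝ) ∈ E) (hp : p ∈ Ioo 0 1) (hx : x ∈ Icc 0 1)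
    (hy : y ∈ Icc 0 1) : op E σ p x y ∈ Icc (max (level E x) (level E y)) (max x y) := by
  have hME := max_level_mem hE h0 hx.1 hy.1
  have hMxy := max_level_le_max h0 hx hy
  set M := max (level E x) (level E y)
  have hM1 : M ≤ 1 := hMxy.trans (max_le hx.2 hy.2)
  have ha := levelCoord_nonneg (σ := σ) hE hME hx.2 (le_max_left _ _)
  have hb := levelCoord_nonneg (σ := σ) hE hME hy.2 (le_max_right _ _)
  set a := levelCoord E σ M x
  set b := levelCoord E σ M y
  have hc0 : 0 ≤ p * a + (1 - p) * b := by nlinarith [hp.1, hp.2]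
  have hcab : p * a + (1 - p) * b ≤ max a b := by
    nlinarith [le_max_left a b, le_max_right a b, hp.1, hp.2]
  have hmono := monotoneOn_chart (E := E) (σ := σ) hM1
  have hlow := hmono (mem_Ici.2 le_rfl) hc0 hc0
  rw [chart_zero] at hlow
  rw [op_of_mem_Ioo hp]
  refine ⟨hlow, (hmono hc0 (le_max_of_le_left ha) hcab).trans ?_⟩
  rcases max_choice a b with hab | hab <;> rw [hab]
  · rw [chart_levelCoord hE hME hx.2 (le_max_left _ _)]
    exact max_le (le_max_left x y) hMxy
  · rw [chart_levelCoord hE hME hy.2 (le_max_right _ _)]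
    exact max_le (le_max_right x y) hMxy

lemma op_nonneg (hE : IsClosed E) (h0 : (0:ℝ) ∈ E) (hp : p ∈ Ioo 0 1) (hx : x ∈ Icc 0 1)
    (hy : y ∈ Icc 0 1) : 0 ≤ op E σ p x y :=
  (le_max_of_le_left (level_nonneg h0 hx.1)).trans (op_mem_Icc hE h0 hp hx hy).1

lemma level_op (hE : IsClosed E) (h0 : (0:ℝ) ∈ E) (hp : p ∈ Ioo 0 1) (hx : x ∈ Icc 0 1)
    (hy : y ∈ Icc 0 1) : level E (op E σ p x y) = max (level E x) (level E y) := by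
  have hmem := op_mem_Icc (σ := σ) hE h0 hp hx hy
  refine le_antisymm ?_ (le_level (max_level_mem hE h0 hx.1 hy.1) hmem.1)
  rw [← level_max h0 hx.1 hy.1]
  exact level_mono h0 (op_nonneg hE h0 hp hx hy) hmem.2

lemma levelCoord_op (hE : IsClosed E) (h0 : (0:ℝ) ∈ E) {M : ℝ} (hM : M ∈ E) (hM1 : M ≤ 1)
    (hp : p ∈ Ioo 0 1) (hx : x ∈ Icc 0 1) (hy : y ∈ Icc 0 1) (hxM : level E x ≤ M)
    (hyM : level E y ≤ M) :
    levelCoord E σ M (op E σ p x y)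
      = p * levelCoord E σ M x + (1 - p) * levelCoord E σ M y := by
  have hmem := op_mem_Icc (σ := σ) hE h0 hp hx hy
  rcases (max_le hxM hyM).lt_or_eq with hlt | heq
  · have hxM' := lt_of_level_lt hM ((le_max_left _ _).trans_lt hlt)
    have hyM' := lt_of_level_lt hM ((le_max_right _ _).trans_lt hlt)
    rw [levelCoord_of_lt hxM', levelCoord_of_lt hyM',
      levelCoord_of_lt (hmem.2.trans_lt (max_lt hxM' hyM'))]
    ring
  rw [levelCoord_of_le (heq ▸ hmem.1), op_of_mem_Ioo hp, heq]
  by_cases hdeg : next E M = M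
  · rw [levelCoord_of_next_eq hE hM hdeg hx.2 hxM, levelCoord_of_next_eq hE hM hdeg hy.2 hyM]
    simp only [mul_zero, add_zero, chart_zero, coord_self]
  · refine coord_chart ((le_next (by linarith)).lt_of_ne (Ne.symm hdeg)) ?_
    have := levelCoord_nonneg (σ := σ) hE hM hx.2 hxM
    have := levelCoord_nonneg (σ := σ) hE hM hy.2 hyM
    nlinarith [hp.1, hp.2]

end Op

section Axioms

variable {p q x x' y z : ℝ}

lemma op_one (x y : ℝ) : op E σ 1 x y = x := by simp [op]

lemma op_zero (x y : ℝ) : op E σ 0 x y = y := by simp [op]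

lemma op_mem (hE : IsClosed E) (h0 : (0:ℝ) ∈ E) (hp : p ∈ Icc 0 1) (hx : x ∈ Icc 0 1)
    (hy : y ∈ Icc 0 1) : op E σ p x y ∈ Icc 0 1 := by
  rcases hp.1.eq_or_lt with rfl | hp0
  · rwa [op_zero]
  rcases hp.2.lt_or_eq with hp1 | rfl
  · exact ⟨op_nonneg hE h0 ⟨hp0, hp1⟩ hx hy,
      (op_mem_Icc hE h0 ⟨hp0, hp1⟩ hx hy).2.trans (max_le hx.2 hy.2)⟩
  · rwa [op_one]

lemma op_self (hE : IsClosed E) (h0 : (0:ℝ) ∈ E) (hp : p ∈ Ioo 0 1) (hx : x ∈ Icc 0 1) :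
    op E σ p x x = x := by
  rw [op_of_mem_Ioo hp, max_self, ← add_mul, add_sub_cancel, one_mul,
    chart_levelCoord hE (level_mem hE h0 hx.1) hx.2 le_rfl, max_eq_left (level_le h0 hx.1)]

lemma op_comm (hp : p ∈ Ioo 0 1) (x y : ℝ) : op E σ p x y = op E σ (1 - p) y x := by
  rw [op_of_mem_Ioo hp, op_of_mem_Ioo ⟨by linarith [hp.2], by linarith [hp.1]⟩, max_comm]
  ring_nf

lemma op_assoc (hE : IsClosed E) (h0 : (0:ℝ) ∈ E) (hp : p ∈ Ioo 0 1) (hq : q ∈ Ioo 0 1)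
    (hx : x ∈ Icc 0 1) (hy : y ∈ Icc 0 1) (hz : z ∈ Icc 0 1) :
    op E σ q (op E σ p x y) z
      = op E σ (p * q) x (op E σ ((1 - p) * q / (1 - p * q)) y z) := by
  obtain ⟨hp0, hp1⟩ := hp
  obtain ⟨hq0, hq1⟩ := hq
  have hpq : 0 < 1 - p * q := by nlinarith
  have hr : (1 - p) * q / (1 - p * q) ∈ Ioo 0 1 :=
    ⟨div_pos (by nlinarith) hpq, (div_lt_one hpq).2 (by nlinarith)⟩
  have hxy := op_mem (σ := σ) hE h0 ⟨hp0.le, hp1.le⟩ hx hy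
  have hyz := op_mem (σ := σ) hE h0 ⟨hr.1.le, hr.2.le⟩ hy hz
  rw [op_of_mem_Ioo ⟨hq0, hq1⟩ (op E σ p x y) z,
    op_of_mem_Ioo ⟨by positivity, by nlinarith⟩ x (op E σ ((1 - p) * q / (1 - p * q)) y z),
    level_op hE h0 ⟨hp0, hp1⟩ hx hy, level_op hE h0 hr hy hz, max_assoc]
  set M := max (level E x) (max (level E y) (level E z))
  have hME : M ∈ E := max_rec' (· ∈ E) (level_mem hE h0 hx.1) (max_level_mem hE h0 hy.1 hz.1)
  have hM1 : M ≤ 1 :=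
    max_le ((level_le h0 hx.1).trans hx.2) (max_le ((level_le h0 hy.1).trans hy.2)
      ((level_le h0 hz.1).trans hz.2))
  have hyM : level E y ≤ M := (le_max_left _ _).trans (le_max_right _ _)
  have hzM : level E z ≤ M := (le_max_right _ _).trans (le_max_right _ _)
  rw [levelCoord_op hE h0 hME hM1 ⟨hp0, hp1⟩ hx hy (le_max_left _ _) hyM,
    levelCoord_op hE h0 hME hM1 hr hy hz hyM hzM]
  congr 1
  rw [div_eq_mul_inv]
  linear_combination (-(q * (1 - p) * (levelCoord E σ M y - levelCoord E σ M z)))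
    * mul_inv_cancel₀ hpq.ne'

lemma op_mono_left (hE : IsClosed E) (h0 : (0:ℝ) ∈ E) (hp : p ∈ Ioo 0 1) (hx : x ∈ Icc 0 1)
    (hx' : x' ∈ Icc 0 1) (hy : y ∈ Icc 0 1) (hxx' : x ≤ x') :
    op E σ p x y ≤ op E σ p x' y := by
  have hMM' : max (level E x) (level E y) ≤ max (level E x') (level E y) :=
    max_le_max (level_mono h0 hx.1 hxx') le_rfl
  have hM'E := max_level_mem hE h0 hx'.1 hy.1
  rcases hMM'.lt_or_eq with hlt | heq
  · refine le_trans ?_ (op_mem_Icc hE h0 hp hx' hy).1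
    exact (lt_of_level_lt hM'E (level_op hE h0 hp hx hy ▸ hlt)).le
  have hM1 : max (level E x') (level E y) ≤ 1 :=
    (max_level_le_max h0 hx' hy).trans (max_le hx'.2 hy.2)
  have hxM : level E x ≤ max (level E x') (level E y) := heq ▸ le_max_left _ _
  have hx'M : level E x' ≤ max (level E x') (level E y) := le_max_left _ _
  have hyM : level E y ≤ max (level E x') (level E y) := le_max_right _ _
  have hxx'c := levelCoord_mono (σ := σ) hE hM'E hM1 hx'.2 hxx' hxM hx'M
  have hx0 := levelCoord_nonneg (σ := σ) hE hM'E hx.2 hxM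
  have hy0 := levelCoord_nonneg (σ := σ) hE hM'E hy.2 hyM
  rw [op_of_mem_Ioo hp, op_of_mem_Ioo hp, heq]
  exact monotoneOn_chart hM1 (mem_Ici.2 (by nlinarith [hp.1, hp.2]))
    (mem_Ici.2 (by nlinarith [hp.1, hp.2])) (by nlinarith [hp.1])

lemma tendsto_add_nhdsGT (z : ℝ) : Tendsto (fun ε => z + ε) (𝓝[>] 0) (𝓝 z) := by
  simpa using ((continuous_const_add z).tendsto 0).mono_left nhdsWithin_le_nhds

lemma eventually_add_mem_Icc (hz : z ∈ Ico 0 1) : ∀ᶠ ε in 𝓝[>] 0, z + ε ∈ Icc 0 1 := by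
  filter_upwards [self_mem_nhdsWithin, (tendsto_add_nhdsGT z).eventually (eventually_lt_nhds hz.2)]
    with ε (hε : 0 < ε) hε1
  exact ⟨by linarith [hz.1], hε1.le⟩

lemma tendsto_levelCoord_add (hE : IsClosed E) (h0 : (0:ℝ) ∈ E) {M : ℝ} (hM : M ∈ E)
    (hMn : M < next E M) (hz : z ∈ Ico 0 1) (hzM : level E z ≤ M) :
    (∀ᶠ ε in 𝓝[>] 0, level E (z + ε) ≤ M) ∧
      Tendsto (fun ε => levelCoord E σ M (z + ε)) (𝓝[>] 0) (𝓝 (levelCoord E σ M z)) := by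
  have hpos : ∀ᶠ ε in 𝓝[>] (0:ℝ), 0 < ε := self_mem_nhdsWithin
  by_cases h : M ≤ z
  · have hzn : z < next E M := h.eq_or_lt.elim (· ▸ hMn)
      fun hlt => lt_next_of_level_eq hE hz.2.le hlt (level_eq_of_le hM hzM h)
    have hev : ∀ᶠ ε in 𝓝[>] 0, M ≤ z + ε ∧ level E (z + ε) = M := by
      filter_upwards [hpos, (tendsto_add_nhdsGT z).eventually (eventually_lt_nhds hzn)]
        with ε hε hεn
      exact ⟨by linarith, level_eq_of_lt_next hM (by linarith) hεn⟩
    refine ⟨hev.mono fun ε hε => hε.2.le, ?_⟩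
    rw [levelCoord_of_le h]
    refine ((continuousAt_coord h hzn).tendsto.comp (tendsto_add_nhdsGT z)).congr' ?_
    filter_upwards [hev] with ε hε
    exact (levelCoord_of_le hε.1).symm
  · have hev : ∀ᶠ ε in 𝓝[>] 0, 0 ≤ z + ε ∧ z + ε < M := by
      filter_upwards [hpos, (tendsto_add_nhdsGT z).eventually (eventually_lt_nhds (not_le.1 h))]
        with ε hε hεM
      exact ⟨by linarith [hz.1], hεM⟩
    refine ⟨hev.mono fun ε hε => (level_le h0 hε.1).trans hε.2.le, ?_⟩
    rw [levelCoord_of_lt (not_le.1 h)]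
    refine tendsto_const_nhds.congr' ?_
    filter_upwards [hev] with ε hε
    exact (levelCoord_of_lt hε.2).symm

lemma tendsto_op_add (hE : IsClosed E) (h0 : (0:ℝ) ∈ E) (hp : p ∈ Ioo 0 1)
    (hx : x ∈ Ico 0 1) (hy : y ∈ Ico 0 1) :
    Tendsto (fun ε => op E σ p (x + ε) (y + ε)) (𝓝[>] 0) (𝓝 (op E σ p x y)) := by
  have hx1 : x ∈ Icc 0 1 := ⟨hx.1, hx.2.le⟩
  have hy1 : y ∈ Icc 0 1 := ⟨hy.1, hy.2.le⟩
  have hME := max_level_mem hE h0 hx.1 hy.1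
  set M := max (level E x) (level E y)
  have hlevel : ∀ᶠ ε in 𝓝[>] 0, x + ε ∈ Icc 0 1 ∧ y + ε ∈ Icc 0 1 ∧
      M ≤ max (level E (x + ε)) (level E (y + ε)) := by
    filter_upwards [eventually_add_mem_Icc hx, eventually_add_mem_Icc hy, self_mem_nhdsWithin]
      with ε hxε hyε (hε : 0 < ε)
    exact ⟨hxε, hyε, max_le_max (level_mono h0 hx.1 (by linarith))
      (level_mono h0 hy.1 (by linarith))⟩
  by_cases hdeg : next E M = M
  · -- `M` is a limit of `E` from the right, so `x ⊕_p y = M = max x y` and we squeeze.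
    have hxyM : max x y ≤ M :=
      max_le (le_of_level_le_of_next_eq hE hME hdeg hx1.2 (le_max_left _ _))
        (le_of_level_le_of_next_eq hE hME hdeg hy1.2 (le_max_right _ _))
    have hop : op E σ p x y = M :=
      le_antisymm ((op_mem_Icc hE h0 hp hx1 hy1).2.trans hxyM) (op_mem_Icc hE h0 hp hx1 hy1).1
    rw [hop]
    refine tendsto_of_tendsto_of_tendsto_of_le_of_le' tendsto_const_nhds
      (tendsto_add_nhdsGT M) ?_ ?_
    · filter_upwards [hlevel] with ε ⟨hxε, hyε, hM⟩
      exact hM.trans (op_mem_Icc hE h0 hp hxε hyε).1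
    · filter_upwards [hlevel] with ε ⟨hxε, hyε, _⟩
      refine (op_mem_Icc hE h0 hp hxε hyε).2.trans ?_
      rw [max_add_add_right]
      linarith
  have hM1 : M ≤ 1 := (max_level_le_max h0 hx1 hy1).trans (max_le hx1.2 hy1.2)
  have hMn : M < next E M := (le_next (by linarith)).lt_of_ne (Ne.symm hdeg)
  obtain ⟨hxM, hxt⟩ := tendsto_levelCoord_add (σ := σ) hE h0 hME hMn hx (le_max_left _ _)
  obtain ⟨hyM, hyt⟩ := tendsto_levelCoord_add (σ := σ) hE h0 hME hMn hy (le_max_right _ _)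
  have hc0 := levelCoord_nonneg (σ := σ) hE hME hx1.2 (le_max_left _ _)
  have hc1 := levelCoord_nonneg (σ := σ) hE hME hy1.2 (le_max_right _ _)
  rw [op_of_mem_Ioo hp]
  refine ((continuousAt_chart (by nlinarith [hp.1, hp.2])).tendsto.comp
    ((hxt.const_mul p).add (hyt.const_mul (1 - p)))).congr' ?_
  filter_upwards [hlevel, hxM, hyM] with ε ⟨_, _, hM⟩ hxε hyε
  rw [Function.comp_apply, op_of_mem_Ioo hp, le_antisymm (max_le hxε hyε) hM]

lemma tendsto_op_nhdsLT_one (hE : IsClosed E) (h0 : (0:ℝ) ∈ E) (hx : x ∈ Icc 0 1)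
    (hy : y ∈ Icc 0 1) (hxy : x ≤ y) :
    Tendsto (fun p => op E σ p y x) (𝓝[<] 1) (𝓝 y) := by
  have hME := max_level_mem hE h0 hy.1 hx.1
  have hM : max (level E y) (level E x) ≤ y :=
    max_le (level_le h0 hy.1) ((level_mono h0 hx.1 hxy).trans (level_le h0 hy.1))
  set M := max (level E y) (level E x)
  have ha := levelCoord_nonneg (σ := σ) hE hME hy.2 (le_max_left _ _)
  have hlin : Tendsto (fun p => p * levelCoord E σ M y + (1 - p) * levelCoord E σ M x)
      (𝓝[<] 1) (𝓝 (levelCoord E σ M y)) := by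
    have : Continuous fun p : ℝ => p * levelCoord E σ M y + (1 - p) * levelCoord E σ M x := by
      fun_prop
    simpa using (this.tendsto 1).mono_left nhdsWithin_le_nhds
  have hlim := (continuousAt_chart (E := E) (σ := σ) (m := M) ha).tendsto.comp hlin
  rw [chart_levelCoord hE hME hy.2 (le_max_left _ _), max_eq_left hM] at hlim
  refine hlim.congr' ?_
  filter_upwards [Ioo_mem_nhdsLT zero_lt_one] with p hp
  rw [Function.comp_apply, op_of_mem_Ioo hp]

lemma op_eq_of_mem (hE : IsClosed E) (h0 : (0:ℝ) ∈ E) (hsub : E ⊆ Icc 0 1) (hy : y ∈ E)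
    (hp : p ∈ Ioc 0 1) : op E σ p y 0 = y := by
  rcases hp.2.lt_or_eq with hp1 | rfl
  · have h := op_mem_Icc (σ := σ) hE h0 ⟨hp.1, hp1⟩ (hsub hy) ⟨le_rfl, zero_le_one⟩
    rw [level_of_mem hy, level_of_mem h0, max_eq_left (hsub hy).1] at h
    exact le_antisymm h.2 h.1
  · exact op_one y 0

/-- If `y ⊕_{1/2} 0 = y`, the level coordinates of `y` and `0` agree, so `y` equals its level. -/
lemma mem_of_op_half_eq (hE : IsClosed E) (h0 : (0:ℝ) ∈ E) (hy : y ∈ Icc 0 1)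
    (h : op E σ (1 / 2) y 0 = y) : y ∈ E := by
  have h01 : (0:ℝ) ∈ Icc 0 1 := ⟨le_rfl, zero_le_one⟩
  have hME := max_level_mem hE h0 hy.1 le_rfl
  have hM1 : max (level E y) (level E 0) ≤ 1 :=
    (max_level_le_max h0 hy h01).trans (max_le hy.2 zero_le_one)
  have hc := levelCoord_op (σ := σ) hE h0 hME hM1 ⟨one_half_pos, one_half_lt_one⟩ hy h01
    (le_max_left _ _) (le_max_right _ _)
  rw [h] at hc
  have hchart := congrArg (chart E σ (max (level E y) (level E 0)))
    (show levelCoord E σ _ y = levelCoord E σ _ 0 by linarith)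
  rw [chart_levelCoord hE hME hy.2 (le_max_left _ _),
    chart_levelCoord hE hME zero_le_one (le_max_right _ _), level_of_mem h0,
    max_eq_left (level_nonneg h0 hy.1), max_eq_right (level_nonneg h0 hy.1),
    max_eq_left (level_le h0 hy.1)] at hchart
  rw [hchart]
  exact level_mem hE h0 hy.1

end Axioms

variable (E σ) in
noncomputable def uca (hE : IsClosed E) (h0 : (0:ℝ) ∈ E) : UCA where
  op := op E σ
  mem _ hp _ hx _ hy := op_mem hE h0 hp hx hy
  idem _ hp _ hx := op_self hE h0 hp hx
  comm _ hp x _ y _ := op_comm hp x y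
  assoc _ hp _ hq _ hx _ hy _ hz := op_assoc hE h0 hp hq hx hy hz
  proj1 x _ y _ := op_one x y
  proj0 x _ y _ := op_zero x y

variable (hE : IsClosed E) (h0 : (0:ℝ) ∈ E)

lemma uca_MO : (uca E σ hE h0).MO := fun _ hx _ hx' _ hy _ hp hxx' =>
  op_mono_left hE h0 hp hx hx' hy hxx'

lemma uca_UC : (uca E σ hE h0).UC := fun _ hx _ hy _ hp =>
  (tendsto_op_add hE h0 hp hx hy).limsup_eq.le

lemma uca_LC : (uca E σ hE h0).LC := fun _ hx _ hy hxy =>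
  (tendsto_op_nhdsLT_one hE h0 hx hy hxy).liminf_eq.ge

lemma uca_E (hsub : E ⊆ Icc 0 1) : (uca E σ hE h0).E = E := by
  ext y
  have hhalf : (1 / 2 : ℝ) ∈ Ioc 0 1 := ⟨one_half_pos, one_half_lt_one.le⟩
  exact ⟨fun ⟨hy, hye⟩ => mem_of_op_half_eq hE h0 hy (hye (1 / 2) hhalf),
    fun hy => ⟨hsub hy, fun _ ht => op_eq_of_mem hE h0 hsub hy ht⟩⟩

lemma next_eq_of_gap {a b : ℝ} (hbE : b ∈ E) (hab : a < b) (hb1 : b ≤ 1)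
    (hgap : Ioo a b ∩ E = ∅) : next E a = b := by
  refine le_antisymm (next_le hbE hab) (le_csInf ⟨b, mem_insert_of_mem _ hbE, hab⟩ ?_)
  rintro e ⟨rfl | he, hae⟩
  · linarith
  · by_contra! heb
    exact hgap.subset ⟨⟨hae, heb⟩, he⟩

lemma isTauIso_chart (hsub : E ⊆ Icc 0 1) {a b : ℝ}
    (hσ : σ a b ∈ ({1, ⊤} : Set ENNReal)) (haE : a ∈ E) (hbE : b ∈ E) (hab : a < b)
    (hgap : Ioo a b ∩ E = ∅) : (uca E σ hE h0).IsTauIso a b (σ a b) (chart E σ a) := by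
  have hn := next_eq_of_gap hbE hab (hsub hbE).2 hgap
  have hchart : ∀ t, chart E σ a t = a + (b - a) * profile (σ a b) t := by simp [chart, hn]
  have hmaps : MapsTo (chart E σ a) (tauSet (σ a b)) (Ico a b) := fun t ht => by
    have := profile_mem_Ico hσ ht
    rw [hchart]
    constructor <;> nlinarith [this.1, this.2]
  have hlevel : ∀ z ∈ Ico a b, level E z = a := fun z hz =>
    level_eq_of_lt_next haE hz.1 (hn ▸ hz.2)
  have hinv : InvOn (coord E σ a) (chart E σ a) (tauSet (σ a b)) (Ico a b) :=
    ⟨fun t ht => coord_chart (hn ▸ hab) ht.1,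
      fun z hz => chart_coord hE (hz.2.le.trans (hsub hbE).2) hz.1 (hlevel z hz)⟩
  refine ⟨hinv.bijOn hmaps fun z hz => ?_, fun p hp s hs t ht => ?_⟩
  · have hs := div_sub_mem_Ico (E := E) hz.1 (hn ▸ hz.2)
    rw [hn] at hs
    simpa [coord, hn] using profileInv_mem_tauSet hσ hs
  · change _ = op E σ p _ _
    rw [op_of_mem_Ioo hp, hlevel _ (hmaps hs), hlevel _ (hmaps ht), max_self,
      levelCoord_of_le (hmaps hs).1, levelCoord_of_le (hmaps ht).1, hinv.1 hs, hinv.1 ht]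

end GapSum

/-- Theorem 4.1: let `E` be a closed subset of `[0,1]` with `0 ∈ E`, let
`Δ = {(a,b) : a, b ∈ E, a < b, (a,b) ∩ E = ∅}`, and let `σ` assign to each
`(a,b) ∈ Δ` an element of `{1, ∞}`.  Then there is a convex algebra
`⟨[0,1], ⊕_p⟩` satisfying (MO), (UC), (LC) with `E^⊕ = E` (hence `Δ^⊕ = Δ`)
and, for each `(a,b) ∈ Δ`, `⟨[a,b), ⊕_p⟩ ≅ ⟨[0, σ_{a,b}), +_p⟩`
(i.e. `τ^⊕_{a,b} = σ_{a,b}`). -/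
theorem stmt_18 (E : Set ℝ) (hEcl : IsClosed E) (hEsub : E ⊆ Set.Icc (0:ℝ) 1)
    (hE0 : (0:ℝ) ∈ E) (σ : ℝ → ℝ → ENNReal)
    (hσ : ∀ a b, (a ∈ E ∧ b ∈ E ∧ a < b ∧ Set.Ioo a b ∩ E = ∅) →
      σ a b ∈ ({1, ⊤} : Set ENNReal)) :
    ∃ A : UCA, A.MO ∧ A.UC ∧ A.LC ∧ A.E = E ∧
      ∀ a b, (a ∈ E ∧ b ∈ E ∧ a < b ∧ Set.Ioo a b ∩ E = ∅) →
        ∃ Φ : ℝ → ℝ, A.IsTauIso a b (σ a b) Φ :=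
  ⟨GapSum.uca E σ hEcl hE0, GapSum.uca_MO hEcl hE0, GapSum.uca_UC hEcl hE0,
    GapSum.uca_LC hEcl hE0, GapSum.uca_E hEcl hE0 hEsub, fun a b hab =>
      ⟨GapSum.chart E σ a, GapSum.isTauIso_chart hEcl hE0 hEsub (hσ a b hab) hab.1 hab.2.1
        hab.2.2.1 hab.2.2.2⟩⟩
end

section
/- Let ⟨[0,1], ⊕_p⟩ be a convex algebra satisfying (MO), (UC) and (LC). Then for every nonempty set A and every map φ : A → [0,1], the homomorphic extension φ# : 𝒟A → [0,1], defined by φ#((p_a)_{a∈A}) = ⊕_{a∈A} p_a φ(a), is lower semicontinuous with respect to the topology of pointwise convergence on 𝒟A. -/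
open Set Filter Topology

/-- The convex combination of a finite list of (weight, element) pairs, built
inductively from the binary operations: with `W` the total weight of the list,
`⊕ ((p,x) :: l) = x` if `p = W` (i.e. the normalized first weight is `1`), and
`x ⊕_{p/W} (⊕ l)` otherwise. -/
noncomputable def UCA.mixList (A : UCA) : List (ℝ × ℝ) → ℝ
  | [] => 0
  | (p, x) :: l =>
      if p = p + (l.map Prod.fst).sum then x
      else A.op (p / (p + (l.map Prod.fst).sum)) x (A.mixList l)

open Classical in
/-- The convex combination `⊕_{a∈A} p_a x_a` of a finitely supported family: the
finite convex combination over the support of `(p_a)` (by parametric commutativity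
and associativity it does not depend on the enumeration of the support).
For `p ∈ 𝒟A` and `φ : A → [0,1]`, `A.mixFam p φ` is the homomorphic extension
`φ# : 𝒟A → [0,1]` evaluated at `p`. -/
noncomputable def UCA.mixFam (A : UCA) {α : Type*} (p : α → ℝ) (x : α → ℝ) : ℝ :=
  if h : (Function.support p).Finite then
    A.mixList (h.toFinset.toList.map fun a => (p a, x a))
  else 0

/-- `𝒟A`: the set of finitely supported families `(p_a)_{a∈A}` of nonnegative reals
summing to `1`, viewed inside `ℝ^A` (which carries the product topology, i.e. the
topology of pointwise convergence). -/
def DSet (α : Type*) : Set (α → ℝ) :=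
  {p | (∀ a, 0 ≤ p a) ∧ (Function.support p).Finite ∧ ∑ᶠ a, p a = 1}

/-!
Fix `s < 1`. Every `p ∈ 𝒟A` close enough to `q` satisfies `s * q a < p a` on the finite
support of `q`, hence is a convex combination `p = s • q + (1 - s) • r` with `r ∈ 𝒟A`.
As `φ#` is a homomorphism of convex algebras, `φ# p = φ# q ⊕_s φ# r ≥ φ# q ⊕_s 0` by (MO),
and by (LC) this exceeds any given `γ < φ# q` once `s` is close enough to `1`.
-/

lemma div_add_mem_Icc {a b : ℝ} (ha : 0 ≤ a) (hb : 0 ≤ b) : a / (a + b) ∈ Icc (0:ℝ) 1 :=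
  ⟨div_nonneg ha (add_nonneg ha hb),
    div_le_one_of_le₀ (le_add_of_nonneg_right hb) (add_nonneg ha hb)⟩

lemma div_add_mem_Ioo {a b : ℝ} (ha : 0 < a) (hb : 0 < b) : a / (a + b) ∈ Ioo (0:ℝ) 1 :=
  ⟨by positivity, (div_lt_one (by positivity)).2 (by linarith)⟩

lemma sum_eq_one_of_mem_DSet {α : Type*} {q : α → ℝ} (hq : q ∈ DSet α) {T : Finset α}
    (hT : Function.support q ⊆ T) : ∑ a ∈ T, q a = 1 :=
  (finsum_eq_sum_of_support_subset q hT).symm.trans hq.2.2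

lemma eventually_exists_mem_DSet_eq_convex_combination {α : Type*} {q : α → ℝ}
    (hq : q ∈ DSet α) {s : ℝ} (hs : s ∈ Ioo (0:ℝ) 1) :
    ∀ᶠ p in 𝓝[DSet α] q, ∃ r ∈ DSet α, p = fun a => s * q a + (1 - s) * r a := by
  classical
  have hs' : 1 - s ≠ 0 := by linarith [hs.2]
  have hnear : ∀ᶠ p in 𝓝 q, ∀ a ∈ Function.support q, s * q a < p a :=
    (hq.2.1.eventually_all).2 fun a ha =>
      ((continuous_apply a).tendsto q).eventually_const_lt
        (mul_lt_of_lt_one_left (lt_of_le_of_ne (hq.1 a) (Ne.symm ha)) hs.2)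
  filter_upwards [nhdsWithin_le_nhds hnear, self_mem_nhdsWithin] with p hp hpD
  set r : α → ℝ := fun a => (p a - s * q a) / (1 - s)
  have hsupp : Function.support r ⊆ Function.support p ∪ Function.support q := fun a ha => by
    by_contra h
    simp only [Set.mem_union, Function.mem_support, not_or, not_not] at h
    simp [r, h.1, h.2] at ha
  set T := hpD.2.1.toFinset ∪ hq.2.1.toFinset
  refine ⟨r, ⟨fun a => ?_, (hpD.2.1.union hq.2.1).subset hsupp, ?_⟩,
    funext fun a => by simp only [r]; field_simp; ring⟩
  · refine div_nonneg ?_ (by linarith [hs.2])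
    by_cases ha : q a = 0
    · simpa [ha] using hpD.1 a
    · exact (sub_pos.2 (hp a ha)).le
  · rw [finsum_eq_sum_of_support_subset r (s := T) (hsupp.trans (by simp [T])),
      ← Finset.sum_div, Finset.sum_sub_distrib, ← Finset.mul_sum,
      sum_eq_one_of_mem_DSet hpD (by simp [T]), sum_eq_one_of_mem_DSet hq (by simp [T]),
      mul_one, div_self hs']

namespace UCA

section Operations

variable (A : UCA) {x y z : ℝ}

lemma op_self {t : ℝ} (ht : t ∈ Icc (0:ℝ) 1) (hx : x ∈ Icc (0:ℝ) 1) : A.op t x x = x := by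
  rcases eq_or_lt_of_le ht.1 with rfl | h0
  · exact A.proj0 x hx x hx
  rcases eq_or_lt_of_le ht.2 with rfl | h1
  · exact A.proj1 x hx x hx
  exact A.idem t ⟨h0, h1⟩ x hx

lemma op_div_add_comm {a b : ℝ} (ha : 0 ≤ a) (hb : 0 ≤ b) (hab : a + b ≠ 0)
    (hx : x ∈ Icc (0:ℝ) 1) (hy : y ∈ Icc (0:ℝ) 1) :
    A.op (a / (a + b)) x y = A.op (b / (b + a)) y x := by
  rcases eq_or_lt_of_le ha with rfl | ha
  · rw [zero_add] at hab
    rw [zero_div, add_zero, div_self hab, A.proj0 x hx y hy, A.proj1 y hy x hx]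
  rcases eq_or_lt_of_le hb with rfl | hb
  · rw [zero_div, add_zero, div_self ha.ne', A.proj0 y hy x hx, A.proj1 x hx y hy]
  rw [A.comm _ (div_add_mem_Ioo ha hb) x hx y hy]
  congr 1
  field_simp
  ring

/-- The associativity axiom in terms of weights; thanks to `0 / 0 = 0` it holds for all
nonnegative weights, degenerate ones included. -/
lemma op_div_add_assoc {a b c : ℝ} (ha : 0 ≤ a) (hb : 0 ≤ b) (hc : 0 ≤ c)
    (hx : x ∈ Icc (0:ℝ) 1) (hy : y ∈ Icc (0:ℝ) 1) (hz : z ∈ Icc (0:ℝ) 1) :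
    A.op ((a + b) / (a + b + c)) (A.op (a / (a + b)) x y) z =
      A.op (a / (a + (b + c))) x (A.op (b / (b + c)) y z) := by
  rcases eq_or_lt_of_le ha with rfl | ha
  · simp only [zero_add, zero_div]
    rw [A.proj0 x hx y hy, A.proj0 x hx _ (A.mem _ (div_add_mem_Icc hb hc) y hy z hz)]
  rcases eq_or_lt_of_le hc with rfl | hc
  · simp only [add_zero]
    rw [div_self (by positivity), A.proj1 _ (A.mem _ (div_add_mem_Icc ha.le hb) x hx y hy) z hz]
    rcases eq_or_lt_of_le hb with rfl | hb
    · rw [add_zero, div_self ha.ne', zero_div, A.proj1 x hx y hy,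
        A.proj1 x hx _ (A.mem _ ⟨le_rfl, zero_le_one⟩ y hy z hz)]
    · rw [div_self hb.ne', A.proj1 y hy z hz]
  rcases eq_or_lt_of_le hb with rfl | hb
  · simp only [add_zero, zero_add, zero_div]
    rw [div_self ha.ne', A.proj1 x hx y hy, A.proj0 y hy z hz]
  have h := A.assoc _ (div_add_mem_Ioo ha hb) _ (div_add_mem_Ioo (add_pos ha hb) hc)
    x hx y hy z hz
  have hab : a / (a + b) * ((a + b) / (a + b + c)) = a / (a + (b + c)) := by
    field_simp
    ring
  have hbc : (1 - a / (a + b)) * ((a + b) / (a + b + c)) / (1 - a / (a + (b + c))) =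
      b / (b + c) := by
    rw [one_sub_div (by positivity), one_sub_div (by positivity), add_sub_cancel_left,
      add_sub_cancel_left, ← add_assoc]
    field_simp
  rwa [hab, hbc] at h

lemma op_div_add_left_comm {a b c : ℝ} (ha : 0 ≤ a) (hb : 0 ≤ b) (hc : 0 ≤ c)
    (hx : x ∈ Icc (0:ℝ) 1) (hy : y ∈ Icc (0:ℝ) 1) (hz : z ∈ Icc (0:ℝ) 1) :
    A.op (a / (a + (b + c))) x (A.op (b / (b + c)) y z) =
      A.op (b / (b + (a + c))) y (A.op (a / (a + c)) x z) := by
  by_cases hab : a + b = 0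
  · obtain ⟨rfl, rfl⟩ : a = 0 ∧ b = 0 := ⟨by linarith, by linarith⟩
    simp only [zero_add, zero_div]
    rw [A.proj0 x hx _ (A.mem _ ⟨le_rfl, zero_le_one⟩ y hy z hz), A.proj0 y hy z hz,
      A.proj0 y hy _ (A.mem _ ⟨le_rfl, zero_le_one⟩ x hx z hz), A.proj0 x hx z hz]
  rw [← A.op_div_add_assoc ha hb hc hx hy hz, A.op_div_add_comm ha hb hab hx hy, add_comm a b,
    A.op_div_add_assoc hb ha hc hy hx hz]

end Operations

lemma MO.op_mono_right {A : UCA} (hMO : A.MO) {t y z z' : ℝ} (ht : t ∈ Ioo (0:ℝ) 1)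
    (hy : y ∈ Icc (0:ℝ) 1) (hz : z ∈ Icc (0:ℝ) 1) (hz' : z' ∈ Icc (0:ℝ) 1) (h : z ≤ z') :
    A.op t y z ≤ A.op t y z' := by
  have ht' : 1 - t ∈ Ioo (0:ℝ) 1 := ⟨by linarith [ht.2], by linarith [ht.1]⟩
  rw [A.comm t ht y hy z hz, A.comm t ht y hy z' hz']
  exact hMO z hz z' hz' y hy (1 - t) ht' h

lemma LC.eventually_lt_op {A : UCA} (hLC : A.LC) {y γ : ℝ} (hy : y ∈ Icc (0:ℝ) 1) (hγ : γ < y) :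
    ∀ᶠ t in 𝓝[<] (1:ℝ), γ < A.op t y 0 := by
  refine eventually_lt_of_lt_liminf (hγ.trans_le (hLC 0 ⟨le_rfl, zero_le_one⟩ y hy hy.1)) ?_
  refine ⟨0, eventually_map.2 ?_⟩
  filter_upwards [Ioo_mem_nhdsLT zero_lt_one] with t ht
  exact (A.mem t ⟨ht.1.le, ht.2.le⟩ y hy 0 ⟨le_rfl, zero_le_one⟩).1

def totalWeight (l : List (ℝ × ℝ)) : ℝ := (l.map Prod.fst).sum

@[simp] lemma totalWeight_nil : totalWeight [] = 0 := rfl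

@[simp] lemma totalWeight_cons (e : ℝ × ℝ) (l : List (ℝ × ℝ)) :
    totalWeight (e :: l) = e.1 + totalWeight l := List.sum_cons

@[simp] lemma totalWeight_append (l₁ l₂ : List (ℝ × ℝ)) :
    totalWeight (l₁ ++ l₂) = totalWeight l₁ + totalWeight l₂ := by
  simp [totalWeight]

lemma totalWeight_map {ι : Type*} (w x : ι → ℝ) (L : List ι) :
    totalWeight (L.map fun i => (w i, x i)) = (L.map w).sum := by
  simp only [totalWeight, List.map_map]
  rfl

lemma totalWeight_perm {l₁ l₂ : List (ℝ × ℝ)} (h : l₁.Perm l₂) :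
    totalWeight l₁ = totalWeight l₂ :=
  (h.map _).sum_eq

def Admissible (l : List (ℝ × ℝ)) : Prop := ∀ e ∈ l, 0 ≤ e.1 ∧ e.2 ∈ Icc (0:ℝ) 1

lemma admissible_cons {e : ℝ × ℝ} {l : List (ℝ × ℝ)} :
    Admissible (e :: l) ↔ (0 ≤ e.1 ∧ e.2 ∈ Icc (0:ℝ) 1) ∧ Admissible l :=
  List.forall_mem_cons

lemma admissible_append {l₁ l₂ : List (ℝ × ℝ)} :
    Admissible (l₁ ++ l₂) ↔ Admissible l₁ ∧ Admissible l₂ :=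
  List.forall_mem_append

lemma Admissible.perm {l₁ l₂ : List (ℝ × ℝ)} (hl : Admissible l₁) (h : l₁.Perm l₂) :
    Admissible l₂ :=
  fun e he => hl e (h.mem_iff.2 he)

lemma admissible_map {ι : Type*} {w x : ι → ℝ} (hw : ∀ i, 0 ≤ w i)
    (hx : ∀ i, x i ∈ Icc (0:ℝ) 1) (L : List ι) : Admissible (L.map fun i => (w i, x i)) := by
  intro e he
  obtain ⟨i, -, rfl⟩ := List.mem_map.1 he
  exact ⟨hw i, hx i⟩

lemma Admissible.totalWeight_nonneg {l : List (ℝ × ℝ)} (hl : Admissible l) :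
    0 ≤ totalWeight l :=
  List.sum_nonneg (by simpa using fun e he => (hl e he).1)

section MixList

variable (A : UCA) {p q x y : ℝ} {l l' : List (ℝ × ℝ)}

lemma mixList_cons_eq_ite : A.mixList ((p, x) :: l) =
    if p = p + totalWeight l then x else A.op (p / (p + totalWeight l)) x (A.mixList l) := rfl

lemma mixList_cons_of_totalWeight_eq_zero (h : totalWeight l = 0) :
    A.mixList ((p, x) :: l) = x := by
  rw [mixList_cons_eq_ite, if_pos (by rw [h, add_zero])]

lemma mixList_mem (hl : Admissible l) : A.mixList l ∈ Icc (0:ℝ) 1 := by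
  induction l with
  | nil => exact ⟨le_rfl, zero_le_one⟩
  | cons e l ih =>
    obtain ⟨⟨hp, hx⟩, hl⟩ := admissible_cons.1 hl
    rw [mixList_cons_eq_ite]
    split_ifs
    · exact hx
    · exact A.mem _ (div_add_mem_Icc hp hl.totalWeight_nonneg) _ hx _ (ih hl)

lemma mixList_cons (hl : Admissible ((p, x) :: l)) (h : p + totalWeight l ≠ 0) :
    A.mixList ((p, x) :: l) = A.op (p / (p + totalWeight l)) x (A.mixList l) := by
  obtain ⟨⟨-, hx⟩, hl⟩ := admissible_cons.1 hl
  rw [mixList_cons_eq_ite]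
  split_ifs with hp
  · rw [← hp] at h ⊢
    rw [div_self h, A.proj1 x hx _ (A.mixList_mem hl)]
  · rfl

lemma mixList_cons_congr (hW : totalWeight l = totalWeight l')
    (h : totalWeight l ≠ 0 → A.mixList l = A.mixList l') :
    A.mixList ((p, x) :: l) = A.mixList ((p, x) :: l') := by
  rw [mixList_cons_eq_ite, mixList_cons_eq_ite, hW]
  split_ifs with hp
  · rfl
  · rw [h fun h0 => hp (by rw [← hW, h0, add_zero])]

lemma mixList_cons_cons (hl : Admissible ((p, x) :: (q, y) :: l))
    (h : p + (q + totalWeight l) ≠ 0) :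
    A.mixList ((p, x) :: (q, y) :: l) =
      A.op (p / (p + (q + totalWeight l))) x
        (A.op (q / (q + totalWeight l)) y (A.mixList l)) := by
  have hl' := (admissible_cons.1 hl).2
  obtain ⟨⟨-, hx⟩, -⟩ := admissible_cons.1 hl
  obtain ⟨⟨-, hy⟩, hl''⟩ := admissible_cons.1 hl'
  rw [A.mixList_cons hl (by simpa using h), totalWeight_cons]
  by_cases hqW : q + totalWeight l = 0
  · rw [hqW, add_zero] at h ⊢
    rw [div_self h, div_zero, A.proj1 x hx _ (A.mixList_mem hl'),
      A.proj1 x hx _ (A.mem _ ⟨le_rfl, zero_le_one⟩ y hy _ (A.mixList_mem hl''))]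
  · rw [A.mixList_cons hl' hqW]

lemma mixList_swap (hl : Admissible ((p, x) :: (q, y) :: l))
    (h : totalWeight ((p, x) :: (q, y) :: l) ≠ 0) :
    A.mixList ((p, x) :: (q, y) :: l) = A.mixList ((q, y) :: (p, x) :: l) := by
  have hl' : Admissible ((q, y) :: (p, x) :: l) := hl.perm (List.Perm.swap _ _ _)
  obtain ⟨⟨hp, hx⟩, hl₁⟩ := admissible_cons.1 hl
  obtain ⟨⟨hq, hy⟩, hl₂⟩ := admissible_cons.1 hl₁
  simp only [totalWeight_cons] at h
  rw [A.mixList_cons_cons hl h, A.mixList_cons_cons hl' fun h' => h (by linarith),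
    A.op_div_add_left_comm hp hq hl₂.totalWeight_nonneg hx hy (A.mixList_mem hl₂)]

lemma mixList_perm (h : l.Perm l') (hl : Admissible l) (hW : totalWeight l ≠ 0) :
    A.mixList l = A.mixList l' := by
  induction h with
  | nil => rfl
  | cons e h ih => exact A.mixList_cons_congr (totalWeight_perm h) (ih (admissible_cons.1 hl).2)
  | swap e₁ e₂ l => exact A.mixList_swap hl hW
  | trans h₁ h₂ ih₁ ih₂ =>
    exact (ih₁ hl hW).trans (ih₂ (hl.perm h₁) (totalWeight_perm h₁ ▸ hW))

lemma mixList_append {l₁ l₂ : List (ℝ × ℝ)} (h₁ : Admissible l₁) (h₂ : Admissible l₂)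
    (hW : totalWeight l₂ ≠ 0) :
    A.mixList (l₁ ++ l₂) = A.op (totalWeight l₁ / (totalWeight l₁ + totalWeight l₂))
      (A.mixList l₁) (A.mixList l₂) := by
  have hm₂ := A.mixList_mem h₂
  have hW₂ : 0 < totalWeight l₂ := lt_of_le_of_ne h₂.totalWeight_nonneg hW.symm
  induction l₁ with
  | nil => rw [List.nil_append, totalWeight_nil, zero_div, A.proj0 _ (A.mixList_mem h₁) _ hm₂]
  | cons e l₁ ih =>
    obtain ⟨p, x⟩ := e
    have hm := A.mixList_mem h₁
    obtain ⟨⟨hp, hx⟩, h₁⟩ := admissible_cons.1 h₁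
    have hW₁ := h₁.totalWeight_nonneg
    have hm₁ := A.mixList_mem h₁
    have hcons : Admissible ((p, x) :: (l₁ ++ l₂)) :=
      admissible_cons.2 ⟨⟨hp, hx⟩, admissible_append.2 ⟨h₁, h₂⟩⟩
    rw [List.cons_append, A.mixList_cons hcons (by rw [totalWeight_append]; positivity), ih h₁,
      totalWeight_append, totalWeight_cons]
    rcases eq_or_ne (p + totalWeight l₁) 0 with h0 | h0
    · obtain ⟨rfl, hl₁⟩ : p = 0 ∧ totalWeight l₁ = 0 := ⟨by linarith, by linarith⟩
      simp only [hl₁, zero_add, zero_div]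
      rw [A.proj0 _ hm₁ _ hm₂, A.proj0 x hx _ hm₂, A.proj0 _ hm _ hm₂]
    · rw [A.mixList_cons (admissible_cons.2 ⟨⟨hp, hx⟩, h₁⟩) h0]
      exact (A.op_div_add_assoc hp hW₁ hW₂.le hx hm₁ hm₂).symm

lemma mixList_split {a b : ℝ} (ha : 0 ≤ a) (hb : 0 ≤ b) (hx : x ∈ Icc (0:ℝ) 1)
    (hl : Admissible l) :
    A.mixList ((a + b, x) :: l) = A.mixList ((a, x) :: (b, x) :: l) := by
  have hW := hl.totalWeight_nonneg
  have hl₂ : Admissible ((a, x) :: (b, x) :: l) :=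
    admissible_cons.2 ⟨⟨ha, hx⟩, admissible_cons.2 ⟨⟨hb, hx⟩, hl⟩⟩
  by_cases h : a + (b + totalWeight l) = 0
  · have hl0 : totalWeight l = 0 := by linarith
    rw [A.mixList_cons_of_totalWeight_eq_zero hl0, A.mixList_cons_of_totalWeight_eq_zero
      (by rw [totalWeight_cons, hl0]; linarith)]
  · rw [A.mixList_cons_cons hl₂ h, ← A.op_div_add_assoc ha hb hW hx hx (A.mixList_mem hl),
      A.op_self (div_add_mem_Icc ha hb) hx,
      A.mixList_cons (admissible_cons.2 ⟨⟨add_nonneg ha hb, hx⟩, hl⟩) (by rwa [add_assoc])]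

end MixList

section MixMap

variable (A : UCA) {ι : Type*}

lemma mixList_map_add {u v w : ι → ℝ} (hu : ∀ i, 0 ≤ u i) (hv : ∀ i, 0 ≤ v i)
    (hw : ∀ i, w i ∈ Icc (0:ℝ) 1) (L : List ι)
    (hW : totalWeight (L.map fun i => (u i + v i, w i)) ≠ 0) :
    A.mixList (L.map fun i => (u i + v i, w i)) =
      A.mixList ((L.map fun i => (u i, w i)) ++ L.map fun i => (v i, w i)) := by
  induction L with
  | nil => rfl
  | cons i L ih =>
    have hL := admissible_append.2 ⟨admissible_map hu hw L, admissible_map hv hw L⟩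
    simp only [List.map_cons, List.cons_append]
    calc A.mixList ((u i + v i, w i) :: L.map fun i => (u i + v i, w i))
        = A.mixList ((u i + v i, w i) :: ((L.map fun i => (u i, w i)) ++
            L.map fun i => (v i, w i))) :=
          A.mixList_cons_congr
            (by simp only [totalWeight_append, totalWeight_map, List.sum_map_add]) ih
      _ = A.mixList ((u i, w i) :: (v i, w i) :: ((L.map fun i => (u i, w i)) ++
            L.map fun i => (v i, w i))) := A.mixList_split (hu i) (hv i) (hw i) hL
      _ = _ := A.mixList_perm (List.perm_middle.symm.cons _) (admissible_cons.2 ⟨⟨hu i, hw i⟩,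
            admissible_cons.2 ⟨⟨hv i, hw i⟩, hL⟩⟩) (by
              simpa [totalWeight_map, List.sum_map_add, add_assoc] using hW)

lemma mixList_map_mul {c : ℝ} (hc : c ≠ 0) (w x : ι → ℝ) (L : List ι) :
    A.mixList (L.map fun i => (c * w i, x i)) = A.mixList (L.map fun i => (w i, x i)) := by
  induction L with
  | nil => rfl
  | cons i L ih =>
    simp only [List.map_cons, mixList_cons_eq_ite, totalWeight_map, ih]
    rw [List.sum_map_mul_left, ← mul_add, mul_div_mul_left _ _ hc]
    simp only [mul_right_inj' hc]

end MixMap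

section MixFam

variable (A : UCA) {α : Type*} {w x : α → ℝ}

lemma mixFam_mem (hw : ∀ a, 0 ≤ w a) (hx : ∀ a, x a ∈ Icc (0:ℝ) 1) :
    A.mixFam w x ∈ Icc (0:ℝ) 1 := by
  rw [mixFam]
  split_ifs
  · exact A.mixList_mem (admissible_map hw hx _)
  · exact ⟨le_rfl, zero_le_one⟩

lemma mixFam_eq_mixList (hw : ∀ a, 0 ≤ w a) (hx : ∀ a, x a ∈ Icc (0:ℝ) 1) {T : Finset α}
    (hT : Function.support w ⊆ T) (hsum : ∑ a ∈ T, w a ≠ 0) :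
    A.mixFam w x = A.mixList (T.toList.map fun a => (w a, x a)) := by
  classical
  have hfin : (Function.support w).Finite := T.finite_toSet.subset hT
  set S := hfin.toFinset
  have hST : S ⊆ T := fun a ha => hT (hfin.mem_toFinset.1 ha)
  have hzero : ∑ a ∈ T \ S, w a = 0 :=
    Finset.sum_eq_zero fun a ha => by simpa [S] using (Finset.mem_sdiff.1 ha).2
  have hS : ∑ a ∈ S, w a ≠ 0 := by
    rwa [← Finset.sum_sdiff hST, hzero, zero_add] at hsum
  have hperm : T.toList.Perm ((T \ S).toList ++ S.toList) := by
    refine (List.perm_ext_iff_of_nodup T.nodup_toList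
      ((T \ S).nodup_toList.append S.nodup_toList ?_)).2 fun a => ?_
    · simp [List.disjoint_left]
    · simp only [Finset.mem_toList, List.mem_append, Finset.mem_sdiff]
      refine ⟨fun h => (em (a ∈ S)).elim Or.inr fun ha => Or.inl ⟨h, ha⟩, ?_⟩
      rintro (⟨h, -⟩ | h)
      exacts [h, hST h]
  rw [mixFam, dif_pos hfin, A.mixList_perm (hperm.map _) (admissible_map hw hx _)
    (by rwa [totalWeight_map, Finset.sum_map_toList]), List.map_append,
    A.mixList_append (admissible_map hw hx _) (admissible_map hw hx _)
      (by rwa [totalWeight_map, Finset.sum_map_toList]),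
    totalWeight_map, Finset.sum_map_toList, hzero, zero_div,
    A.proj0 _ (A.mixList_mem (admissible_map hw hx _)) _
      (A.mixList_mem (admissible_map hw hx _))]

lemma mixFam_convex_combination {q r : α → ℝ} (hq : q ∈ DSet α) (hr : r ∈ DSet α)
    (hx : ∀ a, x a ∈ Icc (0:ℝ) 1) {s : ℝ} (hs : s ∈ Ioo (0:ℝ) 1) :
    A.mixFam (fun a => s * q a + (1 - s) * r a) x = A.op s (A.mixFam q x) (A.mixFam r x) := by
  classical
  set T := hq.2.1.toFinset ∪ hr.2.1.toFinset
  have hqT : Function.support q ⊆ T := fun a ha => by simp [T, ha]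
  have hrT : Function.support r ⊆ T := fun a ha => by simp [T, ha]
  have hq1 := sum_eq_one_of_mem_DSet hq hqT
  have hr1 := sum_eq_one_of_mem_DSet hr hrT
  have hsq : ∀ a, 0 ≤ s * q a := fun a => mul_nonneg hs.1.le (hq.1 a)
  have hsr : ∀ a, 0 ≤ (1 - s) * r a := fun a => mul_nonneg (by linarith [hs.2]) (hr.1 a)
  have hWq : (T.toList.map fun a => s * q a).sum = s := by
    rw [Finset.sum_map_toList, ← Finset.mul_sum, hq1, mul_one]
  have hWr : (T.toList.map fun a => (1 - s) * r a).sum = 1 - s := by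
    rw [Finset.sum_map_toList, ← Finset.mul_sum, hr1, mul_one]
  have hT : Function.support (fun a => s * q a + (1 - s) * r a) ⊆ T := fun a ha => by
    by_contra h
    obtain ⟨hqa, hra⟩ : q a = 0 ∧ r a = 0 := by simpa [T, not_or] using h
    simp [hqa, hra] at ha
  rw [A.mixFam_eq_mixList (fun a => add_nonneg (hsq a) (hsr a)) hx hT (by
        rw [Finset.sum_add_distrib, ← Finset.mul_sum, ← Finset.mul_sum, hq1, hr1]; norm_num),
    A.mixFam_eq_mixList hq.1 hx hqT (by rw [hq1]; exact one_ne_zero),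
    A.mixFam_eq_mixList hr.1 hx hrT (by rw [hr1]; exact one_ne_zero),
    A.mixList_map_add hsq hsr hx _
      (by rw [totalWeight_map, List.sum_map_add, hWq, hWr]; norm_num),
    A.mixList_append (admissible_map hsq hx _) (admissible_map hsr hx _)
      (by rw [totalWeight_map, hWr]; linarith [hs.2]),
    totalWeight_map, totalWeight_map, hWq, hWr, add_sub_cancel, div_one,
    A.mixList_map_mul hs.1.ne', A.mixList_map_mul (by linarith [hs.2])]

end MixFam

end UCA

theorem stmt_19_general {α : Type*} (A : UCA)
    (hMO : A.MO) (hLC : A.LC)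
    (φ : α → ℝ) (hφ : ∀ a, φ a ∈ Set.Icc (0:ℝ) 1) :
    LowerSemicontinuousOn (fun p => A.mixFam p φ) (DSet α) := by
  intro q hq γ hγ
  have hy := A.mixFam_mem hq.1 hφ
  obtain ⟨s, hγs, hs⟩ := ((hLC.eventually_lt_op hy hγ).and (Ioo_mem_nhdsLT zero_lt_one)).exists
  filter_upwards [eventually_exists_mem_DSet_eq_convex_combination hq hs] with p ⟨r, hr, hp⟩
  subst hp
  have hz := A.mixFam_mem hr.1 hφ
  calc γ < A.op s (A.mixFam q φ) 0 := hγs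
    _ ≤ A.op s (A.mixFam q φ) (A.mixFam r φ) :=
      hMO.op_mono_right hs hy ⟨le_rfl, zero_le_one⟩ hz hz.1
    _ = A.mixFam (fun a => s * q a + (1 - s) * r a) φ :=
      (A.mixFam_convex_combination hq hr hφ hs).symm

/-- Proposition 5.2: let `⟨[0,1], ⊕_p⟩` be a convex algebra satisfying (MO), (UC), (LC).
Then for every nonempty set `A` and every `φ : A → [0,1]`, the homomorphic extension
`φ# : 𝒟A → [0,1]`, `φ#((p_a)) = ⊕_{a} p_a φ(a)`, is lower semicontinuous with respect
to the topology of pointwise convergence on `𝒟A`. -/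
theorem stmt_19 {α : Type*} [Nonempty α] (A : UCA)
    (hMO : A.MO) (hUC : A.UC) (hLC : A.LC)
    (φ : α → ℝ) (hφ : ∀ a, φ a ∈ Set.Icc (0:ℝ) 1) :
    LowerSemicontinuousOn (fun p => A.mixFam p φ) (DSet α) :=
  stmt_19_general A hMO hLC φ hφ
end
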